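/- arXiv:2503.21440 — 4 statements merged into one kernel-verified Lean document; each statement's English description precedes it below -/
import Mathlib

section
/- Let n ≥ 2 and define ρ(n,k) = 2^{2(n−k)} · ([n choose k]_2)^2 · (2^k)! · (2^n − 2^k)! / (2^n)!. Then ρ(n,2) = 2^{2n−3}/3 + 1/12 + 1/(2^{n+2} − 12). -/
/-- The Gaussian binomial coefficient `[n choose k]_2`. -/
def gb (n k : ℕ) : ℚ := ∏ i ∈ Finset.range k, (((2:ℚ)^n - 2^i) / ((2:ℚ)^k - 2^i))

/-- `ρ(n,k) = 2^{2(n−k)} · ([n choose k]_2)^2 · (2^k)! · (2^n − 2^k)! / (2^n)!`. -/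
def rho (n k : ℕ) : ℚ :=
  2^(2*(n-k)) * (gb n k)^2 * (2^k).factorial * (2^n - 2^k).factorial / (2^n).factorial

/-
With `x = 2^n`, the Gaussian binomial `[n choose 2]_2` is `(x - 1)(x - 2)/6` and
`(2^n)! / (2^n - 4)! = x(x - 1)(x - 2)(x - 3)`, so `ρ(n,2)` collapses to
`x(x - 1)(x - 2) / (24(x - 3))`; dividing the cubic by `x - 3` gives the stated formula.
-/

lemma gb_two (n : ℕ) : gb n 2 = (2^n - 1) * (2^n - 2) / 6 := by
  simp only [gb, Finset.prod_range_succ, Finset.prod_range_zero]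
  ring

lemma rho_eq_div_descFactorial {n k : ℕ} (hkn : k ≤ n) :
    rho n k = 2^(2*(n-k)) * gb n k ^ 2 * (2^k).factorial / (2^n).descFactorial (2^k) := by
  have hfac := Nat.factorial_mul_descFactorial (Nat.pow_le_pow_right two_pos hkn)
  rw [rho, ← hfac, Nat.cast_mul, mul_comm _ ((Nat.descFactorial _ _ : ℕ) : ℚ)]
  exact mul_div_mul_right _ _ (by positivity)

lemma cast_descFactorial_four {N : ℕ} (hN : 3 ≤ N) :
    (N.descFactorial 4 : ℚ) = N * (N - 1) * (N - 2) * (N - 3) := by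
  simp only [Nat.descFactorial_eq_prod_range, Finset.prod_range_succ, Finset.prod_range_zero,
    Nat.sub_zero]
  push_cast [show 1 ≤ N by omega, show 2 ≤ N by omega, hN]
  ring

lemma rho_two {n : ℕ} (hn : 2 ≤ n) :
    rho n 2 = 2^n * (2^n - 1) * (2^n - 2) / (24 * (2^n - 3)) := by
  have h4 : 4 ≤ 2^n := by simpa using Nat.pow_le_pow_right two_pos hn
  have hpow : (2:ℚ)^(2*(n-2)) = (2^n)^2 / 16 := by
    rw [eq_div_iff (by norm_num), show (16:ℚ) = 2^4 by norm_num, ← pow_mul, ← pow_add, mul_comm n]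
    congr 1; omega
  rw [rho_eq_div_descFactorial hn, gb_two, hpow, show (2:ℕ)^2 = 4 from rfl,
    show (4:ℕ).factorial = 24 from rfl, cast_descFactorial_four (by omega)]
  have h4' : (4:ℚ) ≤ 2^n := by exact_mod_cast h4
  have h1 : (2:ℚ)^n - 1 ≠ 0 := by linarith
  have h2 : (2:ℚ)^n - 2 ≠ 0 := by linarith
  have h3 : (2:ℚ)^n - 3 ≠ 0 := by linarith
  push_cast
  field_simp
  ring

lemma mul_sub_one_mul_sub_two_div_sub_three {K : Type*} [Field K] [CharZero K] {x : K}
    (hx : x - 3 ≠ 0) :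
    x * (x - 1) * (x - 2) / (24 * (x - 3)) = x^2 / 24 + 1/12 + 1/(4 * x - 12) := by
  rw [show 4 * x - 12 = 4 * (x - 3) by ring]
  field_simp
  ring

theorem stmt_4 (n : ℕ) (hn : 2 ≤ n) :
    rho n 2 = (2:ℚ)^(2*n-3)/3 + 1/12 + 1/((2:ℚ)^(n+2) - 12) := by
  have h4 : (4:ℚ) ≤ 2^n := by exact_mod_cast Nat.pow_le_pow_right two_pos hn
  rw [rho_two hn, mul_sub_one_mul_sub_two_div_sub_three (by linarith)]
  obtain ⟨m, rfl⟩ := Nat.exists_eq_add_of_le' hn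
  rw [show 2 * (m + 2) - 3 = 2 * m + 1 by omega]
  ring
end

section
/- With ρ(n,k) = 2^{2(n−k)} · ([n choose k]_2)^2 · (2^k)! · (2^n − 2^k)! / (2^n)!, the sum Σ_{k=4}^{n−1} ρ(n,k) tends to 0 as n → ∞. -/
/-!
Since `(2^k)! (2^n - 2^k)! / (2^n)! = 1 / C(2^n, 2^k)`, we have
`ρ(n,k) = 4^(n-k) [n choose k]_2^2 / C(2^n, 2^k)`. Each factor of the Gaussian binomial is at most
`2^(n-k+1)`, so `[n choose k]_2 ≤ 2^(k(n-k+1))`, while `C(N, m) ≥ (N/m)^m` gives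
`C(2^n, 2^k) ≥ 2^((n-k) 2^k)`. For `4 ≤ k < n` the exponent `(n-k) 2^k` beats
`2(n-k) + 2k(n-k+1)` by at least `n - 7`, hence `ρ(n,k) ≤ 2^7 / 2^n` and the sum of at most `n`
such terms is `O(n / 2^n)`.
-/

open Finset Filter Topology

theorem Nat.pow_le_pow_mul_choose {N m : ℕ} (h : m ≤ N) : N ^ m ≤ m ^ m * N.choose m := by
  have hfact : m.factorial = ∏ i ∈ range m, (m - i) := by
    rw [← prod_range_add_one_eq_factorial, ← prod_range_reflect]
    exact prod_congr rfl fun i hi => by rw [mem_range] at hi; omega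
  have hterm : ∀ i ∈ range m, N * (m - i) ≤ m * (N - i) := by
    intro i hi
    rw [mem_range] at hi
    zify [hi.le, hi.le.trans h]
    nlinarith
  have key : N ^ m * m.factorial ≤ m ^ m * N.choose m * m.factorial :=
    calc N ^ m * m.factorial = ∏ i ∈ range m, N * (m - i) := by
          rw [hfact, prod_mul_distrib, prod_const, card_range]
      _ ≤ ∏ i ∈ range m, m * (N - i) := prod_le_prod' hterm
      _ = m ^ m * N.choose m * m.factorial := by
          rw [prod_mul_distrib, prod_const, card_range, ← Nat.descFactorial_eq_prod_range,
            Nat.descFactorial_eq_factorial_mul_choose]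
          ring
  exact Nat.le_of_mul_le_mul_right key m.factorial_pos

theorem two_pow_le_choose_two_pow {n k : ℕ} (h : k ≤ n) :
    2 ^ ((n - k) * 2 ^ k) ≤ (2 ^ n).choose (2 ^ k) := by
  have hmain := Nat.pow_le_pow_mul_choose (Nat.pow_le_pow_right two_pos h)
  rw [← Nat.pow_mul, ← Nat.pow_mul, show n * 2 ^ k = k * 2 ^ k + (n - k) * 2 ^ k by
    rw [← add_mul, Nat.add_sub_cancel' h], Nat.pow_add] at hmain
  exact Nat.le_of_mul_le_mul_left hmain (by positivity)

section GaussianBinomial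

variable {n k i : ℕ}

theorem gb_factor_nonneg (hk : k ≤ n) (hi : i < k) :
    0 ≤ ((2:ℚ)^n - 2^i) / ((2:ℚ)^k - 2^i) := by
  have hik : (2:ℚ)^i < 2^k := pow_lt_pow_right₀ one_lt_two hi
  have hkn : (2:ℚ)^k ≤ 2^n := pow_le_pow_right₀ one_le_two hk
  apply div_nonneg <;> linarith

-- Since `i < k`, the denominator is at least `2^(k-1)`.
theorem gb_factor_le (hk : k ≤ n) (hi : i < k) :
    ((2:ℚ)^n - 2^i) / ((2:ℚ)^k - 2^i) ≤ 2^(n - k + 1) := by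
  obtain ⟨j, rfl⟩ := Nat.exists_eq_add_of_lt hi
  have hden : (2:ℚ)^i ≤ 2^(i + j) := pow_le_pow_right₀ one_le_two (Nat.le_add_right i j)
  have hsplit : (2:ℚ)^n = 2^(n - (i + j + 1) + 1) * 2^(i + j) := by
    rw [← pow_add]; congr 1; omega
  have hpos : (0:ℚ) < 2 ^ i := by positivity
  rw [div_le_iff₀ (by rw [pow_succ]; linarith), pow_succ (2:ℚ) (i + j)]
  nlinarith [pow_pos (two_pos : (0:ℚ) < 2) (n - (i + j + 1) + 1)]

theorem gb_nonneg (hk : k ≤ n) : 0 ≤ gb n k :=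
  prod_nonneg fun _ hi => gb_factor_nonneg hk (mem_range.1 hi)

theorem gb_le (hk : k ≤ n) : gb n k ≤ 2 ^ (k * (n - k + 1)) := by
  calc gb n k ≤ ∏ _i ∈ range k, (2:ℚ) ^ (n - k + 1) :=
        prod_le_prod (fun _ hi => gb_factor_nonneg hk (mem_range.1 hi))
          (fun _ hi => gb_factor_le hk (mem_range.1 hi))
    _ = 2 ^ (k * (n - k + 1)) := by rw [prod_const, card_range, ← pow_mul, mul_comm]

end GaussianBinomial

theorem rho_eq_div_choose {n k : ℕ} (hk : k ≤ n) :
    rho n k = 2 ^ (2 * (n - k)) * gb n k ^ 2 / (2 ^ n).choose (2 ^ k) := by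
  have hfact : ((2 ^ n).choose (2 ^ k) : ℚ) * (2 ^ k).factorial * (2 ^ n - 2 ^ k).factorial
      = (2 ^ n).factorial := by
    exact_mod_cast Nat.choose_mul_factorial_mul_factorial (Nat.pow_le_pow_right two_pos hk)
  have hchoose : ((2 ^ n).choose (2 ^ k) : ℚ) ≠ 0 :=
    Nat.cast_ne_zero.2 (Nat.choose_pos (Nat.pow_le_pow_right two_pos hk)).ne'
  rw [rho, ← hfact]
  field_simp

theorem five_mul_le_two_pow_add_four {k : ℕ} (hk : 4 ≤ k) : 5 * k ≤ 2 ^ k + 4 := by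
  induction k, hk using Nat.le_induction with
  | base => norm_num
  | succ k _ ih => rw [pow_succ]; omega

theorem rho_exponent_le {n k : ℕ} (hk : 4 ≤ k) (hkn : k < n) :
    2 * (n - k) + 2 * (k * (n - k + 1)) + n ≤ (n - k) * 2 ^ k + 7 := by
  obtain ⟨d, rfl⟩ := Nat.exists_eq_add_of_lt hkn
  have hpow := five_mul_le_two_pow_add_four hk
  rw [show k + d + 1 - k = d + 1 by omega]
  nlinarith

theorem rho_le {n k : ℕ} (hk : 4 ≤ k) (hkn : k < n) : rho n k ≤ 2 ^ 7 * (1 / 2) ^ n := by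
  have hchoose : (2:ℚ) ^ ((n - k) * 2 ^ k) ≤ (2 ^ n).choose (2 ^ k) := by
    exact_mod_cast two_pow_le_choose_two_pow hkn.le
  have hgb : gb n k ^ 2 ≤ 2 ^ (2 * (k * (n - k + 1))) := by
    rw [mul_comm 2, pow_mul]
    exact pow_le_pow_left₀ (gb_nonneg hkn.le) (gb_le hkn.le) 2
  have hexp : (2:ℚ) ^ (2 * (n - k) + 2 * (k * (n - k + 1)) + n) ≤ 2 ^ ((n - k) * 2 ^ k + 7) :=
    pow_le_pow_right₀ one_le_two (rho_exponent_le hk hkn)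
  rw [rho_eq_div_choose hkn.le, one_div_pow, mul_one_div]
  calc 2 ^ (2 * (n - k)) * gb n k ^ 2 / (2 ^ n).choose (2 ^ k)
      ≤ 2 ^ (2 * (n - k)) * 2 ^ (2 * (k * (n - k + 1))) / 2 ^ ((n - k) * 2 ^ k) := by
        gcongr
    _ ≤ 2 ^ 7 / 2 ^ n := by
        rw [div_le_div_iff₀ (by positivity) (by positivity), ← pow_add, ← pow_add, ← pow_add]
        simpa only [add_comm 7] using hexp

theorem tendsto_natCast_mul_half_pow :
    Tendsto (fun n : ℕ => (n : ℚ) * (1 / 2) ^ n) atTop (𝓝 0) := by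
  rw [Rat.isEmbedding_coe_real.tendsto_nhds_iff]
  simpa [Function.comp_def] using
    tendsto_self_mul_const_pow_of_lt_one (r := 1 / 2) (by norm_num) (by norm_num)

theorem stmt_7 :
    Filter.Tendsto (fun n : ℕ => ∑ k ∈ Finset.Icc 4 (n-1), rho n k)
      Filter.atTop (nhds 0) := by
  have hupper : Tendsto (fun n : ℕ => 2 ^ 7 * ((n : ℚ) * (1 / 2) ^ n)) atTop (𝓝 0) := by
    simpa using tendsto_natCast_mul_half_pow.const_mul (2 ^ 7 : ℚ)
  refine tendsto_of_tendsto_of_tendsto_of_le_of_le tendsto_const_nhds hupper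
    (fun n => sum_nonneg fun k _ => by rw [rho]; positivity) fun n => ?_
  calc ∑ k ∈ Icc 4 (n - 1), rho n k ≤ ∑ _k ∈ Icc 4 (n - 1), (2 ^ 7 * (1 / 2) ^ n : ℚ) :=
        sum_le_sum fun k hk => by
          obtain ⟨h4k, hkn⟩ := mem_Icc.1 hk
          exact rho_le h4k (by omega)
    _ ≤ n * (2 ^ 7 * (1 / 2) ^ n) := by
        rw [sum_const, nsmul_eq_mul]
        gcongr
        exact_mod_cast show (Icc 4 (n - 1)).card ≤ n by rw [Nat.card_Icc]; omega
    _ = 2 ^ 7 * (n * (1 / 2) ^ n) := by ring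
end

section
/- For 0 ≤ k ≤ n, the sum over all permutations π of F_2^n of the number of k-dimensional affine subspaces L of F_2^n with π(L) also a k-dimensional affine subspace equals (2^n)! · ρ(n,k), where ρ(n,k) = 2^{2(n−k)} · ([n choose k]_2)^2 · (2^k)! · (2^n − 2^k)! / (2^n)!. -/
abbrev Bv (n : ℕ) := Fin n → ZMod 2

/-- `S` is a `k`-dimensional affine subspace of `F_2^n`. -/
def IsAffSub (n k : ℕ) (S : Set (Bv n)) : Prop :=
  ∃ (W : Submodule (ZMod 2) (Bv n)) (a : Bv n),
    Module.finrank (ZMod 2) W = k ∧ S = {x | x - a ∈ W}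

/-!
The sum counts pairs `(π, L)` with `L` and `π '' L` both `k`-dimensional affine subspaces.
Grouped by `(L, M = π '' L)`, each of the `A²` pairs of subspaces contributes the
`(2^k)! (2^n - 2^k)!` permutations mapping `L` onto `M`: a bijection `L ≃ M` glued to one between
the complements. The number `A` of `k`-dimensional affine subspaces is `2^{n-k} [n choose k]_2`:
the `2^n` base points give each coset of a `k`-dimensional subspace `2^k` times, and every
`k`-dimensional subspace is spanned by the same number of linearly independent `k`-tuples.
-/

open Finset Module Equiv
open scoped Nat

theorem Nat.card_eq_card_mul_of_forall_card_fiber {α β : Type*} [Finite α] [Finite β]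
    (f : α → β) {c : ℕ} (hf : ∀ b, Nat.card {a // f a = b} = c) :
    Nat.card α = Nat.card β * c := by
  have := Fintype.ofFinite β
  rw [← Nat.card_congr (sigmaFiberEquiv f), Nat.card_sigma]
  simp [hf, Nat.card_eq_fintype_card]

section PermImage

variable {α : Type*}

def permImageEquivProd (L M : Set α) [DecidablePred (· ∈ L)] [DecidablePred (· ∈ M)] :
    {π : Perm α // ∀ a, a ∈ L ↔ π a ∈ M} ≃ (L ≃ M) × ({a // a ∉ L} ≃ {a // a ∉ M}) where
  toFun π := (π.1.subtypeEquiv π.2, π.1.subtypeEquiv fun a => not_congr (π.2 a))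
  invFun ef := ⟨subtypeCongr ef.1 ef.2, fun a => by
    by_cases ha : a ∈ L
    · simp [subtypeCongr, sumCompl_symm_apply_of_pos ha, ha]
    · simpa [subtypeCongr, sumCompl_symm_apply_of_neg ha, ha] using (ef.2 ⟨a, ha⟩).2⟩
  left_inv π := by
    ext a
    by_cases ha : a ∈ L
    · simp [subtypeCongr, sumCompl_symm_apply_of_pos ha]
    · simp [subtypeCongr, sumCompl_symm_apply_of_neg ha]
  right_inv ef := by
    ext a
    · simp [subtypeCongr, sumCompl_symm_apply_of_pos a.2]
    · simp [subtypeCongr, sumCompl_symm_apply_of_neg a.2]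

theorem card_perm_image_eq [Finite α] {L M : Set α} (h : Nat.card L = Nat.card M) :
    Nat.card {π : Perm α // π '' L = M} = (Nat.card L)! * (Nat.card α - Nat.card L)! := by
  classical
  have : Fintype α := Fintype.ofFinite α
  have hLM : Fintype.card L = Fintype.card M := by simpa only [Nat.card_eq_fintype_card] using h
  have hLMc : Fintype.card {a // a ∉ L} = Fintype.card {a // a ∉ M} := by
    simp only [Fintype.card_subtype_compl, hLM]
  have himage (π : Perm α) : π '' L = M ↔ ∀ a, a ∈ L ↔ π a ∈ M := by
    rw [← π.eq_preimage_iff_image_eq, Set.ext_iff]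
    rfl
  rw [Nat.card_congr ((subtypeEquivRight himage).trans (permImageEquivProd L M)), Nat.card_prod,
    Nat.card_eq_fintype_card, Fintype.card_equiv (Fintype.equivOfCardEq hLM),
    Nat.card_eq_fintype_card, Fintype.card_equiv (Fintype.equivOfCardEq hLMc),
    Fintype.card_subtype_compl, Nat.card_eq_fintype_card, Nat.card_eq_fintype_card]

theorem card_perm_pred_image [Finite α] (P : Set α → Prop) {m : ℕ}
    (hP : ∀ M, P M → Nat.card M = m) {L : Set α} (hL : P L) :
    Nat.card {π : Perm α // P (π '' L)} = Nat.card {M // P M} * (m ! * (Nat.card α - m)!) := by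
  refine Nat.card_eq_card_mul_of_forall_card_fiber
    (fun π : {π : Perm α // P (π '' L)} => (⟨π.1 '' L, π.2⟩ : {M // P M}))
    fun ⟨M, hM⟩ => ?_
  have hfiber : {π : {π : Perm α // P (π '' L)} // (⟨π.1 '' L, π.2⟩ : {M // P M}) = ⟨M, hM⟩}
      ≃ {π : Perm α // π '' L = M} :=
    ⟨fun π => ⟨π.1.1, congrArg Subtype.val π.2⟩,
      fun π => ⟨⟨π.1, by rw [π.2]; exact hM⟩, Subtype.ext π.2⟩, fun _ => rfl, fun _ => rfl⟩
  rw [Nat.card_congr hfiber, card_perm_image_eq (by rw [hP L hL, hP M hM]), hP L hL]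

theorem sum_card_pred_and_pred_image [Fintype α] [DecidableEq α] (P : Set α → Prop) {m : ℕ}
    (hP : ∀ M, P M → Nat.card M = m) :
    ∑ π : Perm α, Nat.card {L // P L ∧ P (π '' L)}
      = Nat.card {L // P L} ^ 2 * (m ! * (Nat.card α - m)!) := by
  classical
  calc ∑ π : Perm α, Nat.card {L // P L ∧ P (π '' L)}
      = ∑ L : Set α, if P L then Nat.card {π : Perm α // P (π '' L)} else 0 := by
        simp only [Nat.card_eq_fintype_card, Fintype.card_subtype, card_filter]
        rw [sum_comm]
        refine sum_congr rfl fun L _ => ?_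
        split_ifs with hL <;> simp [hL]
    _ = ∑ L : Set α, if P L then Nat.card {M // P M} * (m ! * (Nat.card α - m)!) else 0 :=
        sum_congr rfl fun L _ => by split_ifs with hL; exacts [card_perm_pred_image P hP hL, rfl]
    _ = Nat.card {L // P L} ^ 2 * (m ! * (Nat.card α - m)!) := by
        rw [← sum_filter, sum_const, smul_eq_mul, Nat.card_eq_fintype_card, Fintype.card_subtype]
        ring

end PermImage

section Cosets

variable {R V : Type*} [Ring R] [AddCommGroup V] [Module R V]

theorem Submodule.card_setOf_sub_mem (W : Submodule R V) (a : V) :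
    Nat.card {x | x - a ∈ W} = Nat.card W :=
  Nat.card_congr ((Equiv.subRight a).subtypeEquiv fun _ => Iff.rfl)

theorem Submodule.setOf_sub_mem_eq_of_sub_mem {W : Submodule R V} {a b : V} (hb : b - a ∈ W) :
    {x | x - b ∈ W} = {x | x - a ∈ W} := by
  ext x
  change x - b ∈ W ↔ x - a ∈ W
  rw [← sub_sub_sub_cancel_right x b a, W.sub_mem_iff_left hb]

theorem Submodule.eq_of_setOf_sub_mem_eq {W W' : Submodule R V} {a b : V}
    (h : {x | x - a ∈ W} = {x | x - b ∈ W'}) : W = W' := by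
  have h' : AffineSubspace.mk' a W = AffineSubspace.mk' b W' := SetLike.coe_injective h
  simpa using congrArg AffineSubspace.direction h'

end Cosets

section Subspaces

variable {K V : Type*} [Field K] [AddCommGroup V] [Module K V]

theorem linearIndependent_and_span_eq_iff [FiniteDimensional K V] {W : Submodule K V} {k : ℕ}
    (hW : finrank K W = k) (s : Fin k → V) :
    (LinearIndependent K s ∧ Submodule.span K (Set.range s) = W)
      ↔ (∀ i, s i ∈ W) ∧ LinearIndependent K s := by
  constructor
  · rintro ⟨hs, rfl⟩
    exact ⟨fun i => Submodule.subset_span (Set.mem_range_self i), hs⟩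
  · rintro ⟨hsW, hs⟩
    refine ⟨hs, Submodule.eq_of_le_of_finrank_eq ?_ ?_⟩
    · exact Submodule.span_le.mpr (Set.range_subset_iff.mpr hsW)
    · rw [finrank_span_eq_card hs, Fintype.card_fin, hW]

variable [Fintype K] [Finite V]

theorem card_linearIndependent_span_eq {W : Submodule K V} {k : ℕ} (hW : finrank K W = k) :
    Nat.card {s : Fin k → V // LinearIndependent K s ∧ Submodule.span K (Set.range s) = W}
      = ∏ i : Fin k, (Fintype.card K ^ k - Fintype.card K ^ i.val) := by
  have hbasis : {s : Fin k → V // LinearIndependent K s ∧ Submodule.span K (Set.range s) = W}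
      ≃ {t : Fin k → W // LinearIndependent K t} :=
    (subtypeEquivRight (linearIndependent_and_span_eq_iff hW)).trans <|
      (subtypeSubtypeEquivSubtypeInter _ _).symm.trans <|
        subtypeEquiv subtypePiEquivPi fun s =>
          LinearMap.linearIndependent_iff (v := subtypePiEquivPi s) W.subtype W.ker_subtype
  rw [Nat.card_congr hbasis, card_linearIndependent (hW ▸ le_rfl), hW]

theorem card_submodule_finrank_eq_mul {k : ℕ} (hk : k ≤ finrank K V) :
    Nat.card {W : Submodule K V // finrank K W = k}
        * ∏ i : Fin k, (Fintype.card K ^ k - Fintype.card K ^ i.val)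
      = ∏ i : Fin k, (Fintype.card K ^ finrank K V - Fintype.card K ^ i.val) := by
  have hspan (s : {s : Fin k → V // LinearIndependent K s}) :
      finrank K (Submodule.span K (Set.range s.1)) = k := by
    rw [finrank_span_eq_card s.2, Fintype.card_fin]
  rw [← card_linearIndependent hk]
  refine (Nat.card_eq_card_mul_of_forall_card_fiber
    (fun s => (⟨_, hspan s⟩ : {W : Submodule K V // finrank K W = k})) fun ⟨W, hW⟩ => ?_).symm
  rw [← card_linearIndependent_span_eq hW]
  exact Nat.card_congr ((subtypeEquivRight fun _ => Subtype.ext_iff).trans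
    (subtypeSubtypeEquivSubtypeInter _ fun s => Submodule.span K (Set.range s) = W))

theorem card_cosets_finrank_eq_mul (k : ℕ) :
    Nat.card {S : Set V // ∃ (W : Submodule K V) (a : V), finrank K W = k ∧ S = {x | x - a ∈ W}}
        * Fintype.card K ^ k
      = Nat.card {W : Submodule K V // finrank K W = k} * Nat.card V := by
  classical
  have := Fintype.ofFinite V
  rw [← Nat.card_prod]
  refine (Nat.card_eq_card_mul_of_forall_card_fiber
    (fun p : {W : Submodule K V // finrank K W = k} × V =>
      (⟨{x | x - p.2 ∈ p.1.1}, p.1.1, p.2, p.1.2, rfl⟩ :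
        {S : Set V // ∃ (W : Submodule K V) (a : V), finrank K W = k ∧ S = {x | x - a ∈ W}}))
    ?_).symm
  rintro ⟨S, W, a, hW, rfl⟩
  have hfiber : {p : {W : Submodule K V // finrank K W = k} × V //
        {x | x - p.2 ∈ p.1.1} = {x | x - a ∈ W}} ≃ {x | x - a ∈ W} :=
    { toFun p := ⟨p.1.2, (Set.ext_iff.mp p.2 p.1.2).mp (by simp)⟩
      invFun x := ⟨(⟨W, hW⟩, x.1), Submodule.setOf_sub_mem_eq_of_sub_mem x.2⟩
      left_inv p := Subtype.ext <| Prod.ext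
        (Subtype.ext (Submodule.eq_of_setOf_sub_mem_eq p.2).symm) rfl
      right_inv _ := rfl }
  rw [Nat.card_congr ((subtypeEquivRight fun _ => Subtype.ext_iff).trans hfiber),
    Submodule.card_setOf_sub_mem, Nat.card_eq_fintype_card, card_eq_pow_finrank (K := K), hW]

end Subspaces

section Binary

variable {n k : ℕ}

theorem card_bv : Nat.card (Bv n) = 2 ^ n := by
  rw [Nat.card_fun, Nat.card_zmod, Nat.card_fin]

theorem card_of_isAffSub {S : Set (Bv n)} (hS : IsAffSub n k S) : Nat.card S = 2 ^ k := by
  classical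
  obtain ⟨W, a, hW, rfl⟩ := hS
  rw [Submodule.card_setOf_sub_mem, Nat.card_eq_fintype_card, card_eq_pow_finrank (K := ZMod 2),
    ZMod.card, hW]

theorem cast_prod_two_pow_sub {m : ℕ} (hkm : k ≤ m) :
    ((∏ i : Fin k, (2 ^ m - 2 ^ i.val) : ℕ) : ℚ) = ∏ i ∈ range k, ((2 : ℚ) ^ m - 2 ^ i) := by
  rw [Nat.cast_prod, ← Fin.prod_univ_eq_prod_range]
  refine prod_congr rfl fun i _ => ?_
  rw [Nat.cast_sub (Nat.pow_le_pow_right two_pos (i.2.le.trans hkm))]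
  push_cast
  rfl

theorem gb_eq_card_submodule (h : k ≤ n) :
    gb n k = Nat.card {W : Submodule (ZMod 2) (Bv n) // finrank (ZMod 2) W = k} := by
  have hcount := card_submodule_finrank_eq_mul (K := ZMod 2) (V := Bv n) (k := k) (by simpa)
  rw [ZMod.card, finrank_fin_fun] at hcount
  have hden : ∏ i ∈ range k, ((2 : ℚ) ^ k - 2 ^ i) ≠ 0 :=
    prod_ne_zero_iff.mpr fun i hi =>
      sub_ne_zero.mpr (pow_lt_pow_right₀ one_lt_two (mem_range.mp hi)).ne'
  rw [gb, prod_div_distrib, div_eq_iff hden, ← cast_prod_two_pow_sub le_rfl,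
    ← cast_prod_two_pow_sub h, ← Nat.cast_mul, hcount]

theorem card_isAffSub (h : k ≤ n) :
    (Nat.card {S // IsAffSub n k S} : ℚ) = 2 ^ (n - k) * gb n k := by
  set G := Nat.card {W : Submodule (ZMod 2) (Bv n) // finrank (ZMod 2) W = k}
  have hcount : (Nat.card {S // IsAffSub n k S} : ℚ) * 2 ^ k = G * 2 ^ n := by
    have := card_cosets_finrank_eq_mul (K := ZMod 2) (V := Bv n) k
    rw [ZMod.card, card_bv] at this
    exact_mod_cast this
  have hpow : (2 : ℚ) ^ n = 2 ^ (n - k) * 2 ^ k := by rw [← pow_add, Nat.sub_add_cancel h]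
  rw [gb_eq_card_submodule h]
  apply mul_right_cancel₀ (pow_ne_zero k (two_ne_zero : (2 : ℚ) ≠ 0))
  linear_combination hcount + G * hpow

end Binary

theorem stmt_9 (n k : ℕ) (h : k ≤ n) :
    (∑ π : Equiv.Perm (Bv n),
        (Nat.card {L : Set (Bv n) // IsAffSub n k L ∧ IsAffSub n k (π '' L)} : ℚ))
      = (2^n).factorial * rho n k := by
  have hsum := sum_card_pred_and_pred_image (IsAffSub n k) fun _ => card_of_isAffSub
  rw [card_bv] at hsum
  rw [← Nat.cast_sum, hsum, rho]
  push_cast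
  rw [card_isAffSub h]
  field_simp
  ring
end

section
/- Let L be a k-dimensional affine subspace of F_2^n and π : L → F_2^k a bijection. For φ : F_2^n → F_2 define H_{π,φ} as the set of affine maps H : L → F_2^k such that the function x ↦ ⟨π(x), H(x)⟩ ⊕ φ(x) on L is affine (here ⟨·,·⟩ is the standard inner product on F_2^k). Then Σ_{φ : F_2^n → F_2} |H_{π,φ}| = 2^{2^n − 2^k + (k+1)^2}. -/
/-- The standard inner product on `F_2^k`. -/
def ip (k : ℕ) (a b : Bv k) : ZMod 2 := ∑ i, a i * b i

/-- A map `H : L → F_2^k` is affine if it is the restriction of an affine map on `F_2^n`. -/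
def IsAffMapOn (n k : ℕ) (L : Set (Bv n)) (H : L → Bv k) : Prop :=
  ∃ (A : Bv n →ₗ[ZMod 2] Bv k) (c : Bv k), ∀ x : L, H x = A x.val + c

/-- A Boolean function on `L` is affine if it is the restriction of `x ↦ ⟨a,x⟩ ⊕ c`. -/
def IsAffBoolOn (n : ℕ) (L : Set (Bv n)) (g : L → ZMod 2) : Prop :=
  ∃ (a : Bv n) (c : ZMod 2), ∀ x : L, g x = ip n a x.val + c

/-! For fixed affine `H`, the map `φ ↦ (x ↦ ⟨π x, H x⟩ + φ x)` on `L`, together with `φ` off `L`,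
is a bijection from all `φ` onto pairs (function on `L`, function on `Lᶜ`); so after swapping the
sum and the count, every affine `H` contributes (number of affine Boolean functions on `L`) ·
`2^(2^n - 2^k)`. Parametrising `L` by `F_2^k`, the affine maps `L → V` are the pairs
(linear map `F_2^k → V`, constant), which gives `2^(k(k+1)) · 2^(k+1) · 2^(2^n - 2^k)`. -/

section AffineOn

variable (K : Type*) {E U V : Type*} [Field K] [AddCommGroup E] [Module K E] [AddCommGroup U]
  [Module K U] [AddCommGroup V] [Module K V]

def IsAffineOn (L : Set E) (H : L → V) : Prop :=
  ∃ (A : E →ₗ[K] V) (c : V), ∀ x : L, H x = A x + c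

variable {K} {L : Set E} {a : E} {f : U →ₗ[K] E} {e : U ≃ L}

theorem isAffineOn_iff_exists_eq_comp_symm (he : ∀ t, (e t : E) = a + f t) (H : L → V) :
    IsAffineOn K L H ↔ ∃ (B : U →ₗ[K] V) (c : V), H = fun x => B (e.symm x) + c := by
  have hx : ∀ x : L, (x : E) = a + f (e.symm x) := fun x => by rw [← he, e.apply_symm_apply]
  constructor
  · rintro ⟨A, c, hH⟩
    refine ⟨A ∘ₗ f, A a + c, funext fun x => ?_⟩
    rw [hH, hx x, map_add, LinearMap.comp_apply]
    abel
  · rintro ⟨B, c, rfl⟩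
    have hf : Function.Injective f := fun s t hst =>
      e.injective (Subtype.ext (by rw [he, he, hst]))
    obtain ⟨g, hgf⟩ := f.exists_leftInverse_of_injective (LinearMap.ker_eq_bot.mpr hf)
    refine ⟨B ∘ₗ g, c - B (g a), fun x => ?_⟩
    rw [hx x, LinearMap.comp_apply, map_add, ← LinearMap.comp_apply g f, hgf, map_add]
    simp only [LinearMap.id_apply]
    abel

theorem card_isAffineOn (he : ∀ t, (e t : E) = a + f t) :
    Nat.card {H : L → V // IsAffineOn K L H} = Nat.card (U →ₗ[K] V) * Nat.card V := by
  let param : (U →ₗ[K] V) × V → (L → V) := fun p x => p.1 (e.symm x) + p.2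
  have hparam : Function.Injective param := by
    rintro ⟨B, c⟩ ⟨B', c'⟩ h
    have h' : ∀ t, B t + c = B' t + c' := fun t => by
      simpa [param] using congrFun h (e t)
    have hc : c = c' := by simpa using h' 0
    subst hc
    exact Prod.ext (LinearMap.ext fun t => add_right_cancel (h' t)) rfl
  have hrange : {H : L → V | IsAffineOn K L H} = Set.range param := by
    ext H
    simp [isAffineOn_iff_exists_eq_comp_symm he, param, eq_comm]
  rw [← Nat.card_prod, ← Nat.card_range_of_injective hparam, ← hrange]
  rfl

theorem card_isAffineOn_pi {k : ℕ} {f : (Fin k → K) →ₗ[K] E} {e : (Fin k → K) ≃ L}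
    (he : ∀ t, (e t : E) = a + f t) :
    Nat.card {H : L → V // IsAffineOn K L H} = Nat.card V ^ (k + 1) := by
  rw [card_isAffineOn he, Nat.card_congr (LinearEquiv.piRing K V (Fin k) K).toEquiv,
    Nat.card_fun, Nat.card_fin, pow_succ]

end AffineOn


theorem card_subtype_add_restrict {α M : Type*} [AddGroup M] (s : Set α) (t : s → M)
    (P : (s → M) → Prop) :
    Nat.card {φ : α → M // P fun x => t x + φ x} =
      Nat.card {g : s → M // P g} * Nat.card (↥sᶜ → M) := by
  classical
  rw [← Nat.card_prod]
  exact Nat.card_congr <|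
    (Equiv.subtypeEquiv (Equiv.piEquivPiSubtypeProd (· ∈ s) fun _ => M) fun _ => Iff.rfl).trans <|
      Equiv.prodSubtypeFstEquivSubtypeProd.trans <|
        Equiv.prodCongr (Equiv.subtypeEquiv (Equiv.addLeft t) fun _ => Iff.rfl) (Equiv.refl _)

open Finset in
theorem sum_card_subtype_and_eq_mul {α β : Type*} [Fintype α] [Finite β] (A : β → Prop)
    (B : α → β → Prop) (c : ℕ) (hB : ∀ b, A b → Nat.card {a // B a b} = c) :
    ∑ a, Nat.card {b // A b ∧ B a b} = Nat.card {b // A b} * c := by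
  classical
  have := Fintype.ofFinite β
  simp only [Nat.card_eq_fintype_card, Fintype.card_subtype] at hB ⊢
  calc ∑ a, #{b | A b ∧ B a b}
      = ∑ a, ∑ b with A b, if B a b then 1 else 0 := by
        simp only [card_filter, sum_filter, ite_and]
    _ = ∑ b with A b, ∑ a, if B a b then 1 else 0 := sum_comm
    _ = ∑ b with A b, c := sum_congr rfl fun b hb => by
        rw [← card_filter, hB b (mem_filter.mp hb).2]
    _ = #{b | A b} * c := by rw [sum_const, smul_eq_mul]

theorem IsAffSub.exists_equiv {n k : ℕ} {L : Set (Bv n)} (hL : IsAffSub n k L) :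
    ∃ (a : Bv n) (f : Bv k →ₗ[ZMod 2] Bv n) (e : Bv k ≃ L), ∀ t, (e t : Bv n) = a + f t := by
  obtain ⟨W, a, hW, rfl⟩ := hL
  let b := Module.finBasisOfFinrankEq (ZMod 2) W hW
  exact ⟨a, W.subtype ∘ₗ b.equivFun.symm.toLinearMap,
    b.equivFun.symm.toEquiv.trans (Equiv.subtypeEquiv (Equiv.addLeft a) fun w => by simp),
    fun t => rfl⟩

theorem isAffBoolOn_iff_isAffineOn {n : ℕ} {L : Set (Bv n)} (g : L → ZMod 2) :
    IsAffBoolOn n L g ↔ IsAffineOn (ZMod 2) L g := by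
  constructor
  · rintro ⟨a, c, hg⟩
    exact ⟨dotProductEquiv (ZMod 2) (Fin n) a, c, hg⟩
  · rintro ⟨A, c, hg⟩
    obtain ⟨a, rfl⟩ := (dotProductEquiv (ZMod 2) (Fin n)).surjective A
    exact ⟨a, c, hg⟩

theorem stmt_10_general (n k : ℕ) (L : Set (Bv n)) (hL : IsAffSub n k L)
    (π : Bv n → Bv k) :
    ∑ φ : Bv n → ZMod 2,
        Nat.card {H : L → Bv k // IsAffMapOn n k L H ∧
          IsAffBoolOn n L (fun x => ip k (π x.val) (H x) + φ x.val)}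
      = 2^(2^n - 2^k + (k+1)^2) := by
  classical
  obtain ⟨a, f, e, he⟩ := hL.exists_equiv
  have hcompl : Nat.card ↥Lᶜ = 2 ^ n - 2 ^ k := by
    rw [Nat.card_eq_fintype_card, Fintype.card_compl_set, ← Nat.card_eq_fintype_card (α := L),
      ← Nat.card_congr e]
    simp
  have hbool : Nat.card {g : L → ZMod 2 // IsAffBoolOn n L g} = 2 ^ (k + 1) := by
    simp_rw [isAffBoolOn_iff_isAffineOn]
    rw [card_isAffineOn_pi he, Nat.card_zmod]
  have hmap : Nat.card {H : L → Bv k // IsAffMapOn n k L H} = (2 ^ k) ^ (k + 1) :=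
    (card_isAffineOn_pi he).trans (by simp)
  rw [sum_card_subtype_and_eq_mul _ _ (2 ^ (k + 1) * 2 ^ (2 ^ n - 2 ^ k)) fun H _ => by
    rw [card_subtype_add_restrict L (fun x => ip k (π x) (H x)), hbool, Nat.card_fun, hcompl,
      Nat.card_zmod], hmap, ← pow_mul, ← pow_add, ← pow_add]
  congr 1
  ring

theorem stmt_10 (n k : ℕ) (hk : k ≤ n) (L : Set (Bv n)) (hL : IsAffSub n k L)
    (π : Bv n → Bv k) (hπ : Set.BijOn π L Set.univ) :
    ∑ φ : Bv n → ZMod 2,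
        Nat.card {H : L → Bv k // IsAffMapOn n k L H ∧
          IsAffBoolOn n L (fun x => ip k (π x.val) (H x) + φ x.val)}
      = 2^(2^n - 2^k + (k+1)^2) :=
  stmt_10_general n k L hL π
end
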